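/- With Q(s) = 2a·sqrt(1-s²) + (a²-1)·s, b = 1, and Θ(s) = (Q(s) - s·Q'(s))/(2·(1 + s·Q(s) + (1-s²)·Q'(s))), one has Θ(s) = 1/(a·sqrt(1-s²)), for nonzero real a and |s| < 1 on the set where the denominator is nonzero. -/

import Mathlib

/-!
With `r = √(1 - s²)` one has `Q' = -2as/r + a² - 1`; using `r² + s² = 1`, the numerator
`Q - sQ'` collapses to `2a/r` and the bracket `1 + sQ + (1 - s²)Q'` to `a²`, so
`Θ = (2a/r) / (2a²) = 1/(ar)`.
-/

open Real

theorem hasDerivAt_sqrt_one_sub_sq {s : ℝ} (hs : 1 - s ^ 2 ≠ 0) :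
    HasDerivAt (fun t : ℝ => √(1 - t ^ 2)) (-s / √(1 - s ^ 2)) s := by
  convert ((hasDerivAt_pow 2 s).const_sub 1).sqrt hs using 1
  field_simp
  ring

section Algebra

variable {K : Type*} [Field K] {a r s : K}

theorem numerator_eq_of_sq_eq (hr : r ≠ 0) (hrs : r ^ 2 = 1 - s ^ 2) :
    (2 * a * r + (a ^ 2 - 1) * s) - s * (2 * a * (-s / r) + (a ^ 2 - 1)) = 2 * a / r := by
  field_simp
  linear_combination 2 * a * hrs

theorem denominator_eq_of_sq_eq (hr : r ≠ 0) (hrs : r ^ 2 = 1 - s ^ 2) :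
    1 + s * (2 * a * r + (a ^ 2 - 1) * s) + (1 - s ^ 2) * (2 * a * (-s / r) + (a ^ 2 - 1)) =
      a ^ 2 := by
  field_simp
  linear_combination 2 * s * a * hrs

-- At `a = 0` both sides are `0`, by the convention `x / 0 = 0`.
theorem two_mul_div_div_two_mul_sq [NeZero (2 : K)] (hr : r ≠ 0) :
    2 * a / r / (2 * a ^ 2) = 1 / (a * r) := by
  rcases eq_or_ne a 0 with rfl | ha
  · simp
  · field_simp

end Algebra

theorem stmt_4_general (a : ℝ) (Q : ℝ → ℝ)
    (hQ : ∀ s : ℝ, Q s = 2 * a * Real.sqrt (1 - s ^ 2) + (a ^ 2 - 1) * s)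
    (s : ℝ) (hs : |s| < 1) :
    (Q s - s * deriv Q s) / (2 * (1 + s * Q s + (1 - s ^ 2) * deriv Q s)) =
      1 / (a * Real.sqrt (1 - s ^ 2)) := by
  have hpos : 0 < 1 - s ^ 2 := by nlinarith [abs_lt.mp hs]
  set r := √(1 - s ^ 2)
  have hr : r ≠ 0 := (Real.sqrt_pos.mpr hpos).ne'
  have hr2 : r ^ 2 = 1 - s ^ 2 := Real.sq_sqrt hpos.le
  have hQ' : HasDerivAt Q (2 * a * (-s / r) + (a ^ 2 - 1)) s := by
    rw [funext hQ]
    exact ((hasDerivAt_sqrt_one_sub_sq hpos.ne').const_mul (2 * a)).add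
      (by simpa using (hasDerivAt_id' s).const_mul (a ^ 2 - 1))
  rw [hQ'.deriv, hQ s, numerator_eq_of_sq_eq hr hr2, denominator_eq_of_sq_eq hr hr2,
    two_mul_div_div_two_mul_sq hr]

theorem stmt_4 (a : ℝ) (ha : a ≠ 0) (Q : ℝ → ℝ)
    (hQ : ∀ s : ℝ, Q s = 2 * a * Real.sqrt (1 - s ^ 2) + (a ^ 2 - 1) * s)
    (s : ℝ) (hs : |s| < 1)
    (hden : 1 + s * Q s + (1 - s ^ 2) * deriv Q s ≠ 0) :
    (Q s - s * deriv Q s) / (2 * (1 + s * Q s + (1 - s ^ 2) * deriv Q s)) =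
      1 / (a * Real.sqrt (1 - s ^ 2)) :=
  stmt_4_general a Q hQ s hs
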